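/- arXiv:1609.00211 — 7 statements merged into one kernel-verified Lean document; each statement's English description precedes it below -/
import Mathlib

section
/- Let G = (V,E) be a finite simple graph with n = |V|, and let 𝒢 be the graph obtained from G by the subdivision-path-apex construction. If U ⊆ V is an independent set of G, then the set 𝒰 = U ∪ {e^i : e ∈ E, 0 ≤ i ≤ 2n} is a skew stalled subset of 𝒢. -/
/-- An empty vertex `v` is forced by the filled set `F` if some filled vertex `u ∈ F`
adjacent to `v` has `v` as its unique neighbor outside `F`. -/
def IsForced {W : Type*} (H : SimpleGraph W) (F : Set W) (v : W) : Prop :=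
  v ∉ F ∧ ∃ u, u ∈ F ∧ H.Adj u v ∧ ∀ w, H.Adj u w → w ∉ F → w = v

/-- An empty vertex `v` is skew forced by `F` if some vertex `u` (filled or not)
adjacent to `v` has `v` as its unique neighbor outside `F`. -/
def IsSkewForced {W : Type*} (H : SimpleGraph W) (F : Set W) (v : W) : Prop :=
  v ∉ F ∧ ∃ u, H.Adj u v ∧ ∀ w, H.Adj u w → w ∉ F → w = v

/-- `F` is stalled if no empty vertex is forced by `F`. -/
def Stalled {W : Type*} (H : SimpleGraph W) (F : Set W) : Prop :=
  ∀ v, ¬ IsForced H F v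

/-- `F` is skew stalled if no empty vertex is skew forced by `F`. -/
def SkewStalled {W : Type*} (H : SimpleGraph W) (F : Set W) : Prop :=
  ∀ v, ¬ IsSkewForced H F v

/-- A set of vertices is independent if its vertices are pairwise non-adjacent. -/
def IndepIn {W : Type*} (H : SimpleGraph W) (U : Set W) : Prop :=
  U.Pairwise fun a b => ¬ H.Adj a b

/-- Vertex set of the subdivision-path-apex construction: the vertices of `G`,
vertices `e^i` for each edge `e` and `0 ≤ i ≤ 2n`, and one apex vertex `ε`. -/
abbrev GVert {V : Type*} [Fintype V] (G : SimpleGraph V) : Type _ :=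
  V ⊕ (G.edgeSet × Fin (2 * Fintype.card V + 1)) ⊕ Unit

/-- Generating relation: `v ~ e^0` when `v ∈ e`; `e^i ~ e^{i+1}`; `ε ~ e^0`. -/
def gRel {V : Type*} [Fintype V] (G : SimpleGraph V) : GVert G → GVert G → Prop
  | Sum.inl v, Sum.inr (Sum.inl (e, i)) => i.val = 0 ∧ v ∈ (e : Sym2 V)
  | Sum.inr (Sum.inl (e, i)), Sum.inr (Sum.inl (e', j)) => e = e' ∧ i.val + 1 = j.val
  | Sum.inr (Sum.inr _), Sum.inr (Sum.inl (_, i)) => i.val = 0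
  | _, _ => False

/-- The subdivision-path-apex construction `𝒢`. -/
def GG {V : Type*} [Fintype V] (G : SimpleGraph V) : SimpleGraph (GVert G) :=
  SimpleGraph.fromRel (gRel G)

/-- if `U` is independent in `G`, then `U ∪ {e^i : e ∈ E, 0 ≤ i ≤ 2n}`
is a skew stalled subset of `𝒢`. -/
theorem indep_union_paths_skewStalled {V : Type*} [Fintype V] (G : SimpleGraph V)
    (U : Set V) (hU : IndepIn G U) :
    SkewStalled (GG G)
      ((Sum.inl '' U) ∪
        Set.range (fun p : G.edgeSet × Fin (2 * Fintype.card V + 1) =>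
          (Sum.inr (Sum.inl p) : GVert G))) := by
  rintro v ⟨hv, u, hadj, huniq⟩
  rw [GG, SimpleGraph.fromRel_adj] at hadj
  obtain ⟨hne, hrel⟩ := hadj
  match v, u, hne, hrel, hv, huniq with
  | Sum.inr (Sum.inl p), u, _, _, hv, _ =>
    exact hv (Or.inr ⟨p, rfl⟩)
  | Sum.inl x, Sum.inl y, _, hrel, _, _ => simp [gRel] at hrel
  | Sum.inl x, Sum.inr (Sum.inr _), _, hrel, _, _ => simp [gRel] at hrel
  | Sum.inl x, Sum.inr (Sum.inl (e, i)), _, hrel, _, huniq =>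
    have hi : i.val = 0 := by
      rcases hrel with h | h
      · simp [gRel] at h
      · exact h.1
    have hadje : (GG G).Adj (Sum.inr (Sum.inl (e, i)))
        (Sum.inr (Sum.inr ()) : GVert G) := by
      rw [GG, SimpleGraph.fromRel_adj]
      exact ⟨by simp, Or.inr hi⟩
    have hnm : (Sum.inr (Sum.inr ()) : GVert G) ∉
        (Sum.inl '' U) ∪ Set.range (fun p : G.edgeSet × Fin (2 * Fintype.card V + 1) =>
          (Sum.inr (Sum.inl p) : GVert G)) := by
      rintro (⟨y, _, h⟩ | ⟨p, h⟩) <;> simp at h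
    have := huniq _ hadje hnm
    simp at this
  | Sum.inr (Sum.inr _), Sum.inl y, _, hrel, _, _ => simp [gRel] at hrel
  | Sum.inr (Sum.inr _), Sum.inr (Sum.inr _), hne, hrel, _, _ => simp [gRel] at hrel
  | Sum.inr (Sum.inr c), Sum.inr (Sum.inl (⟨s, hs⟩, i)), _, hrel, _, huniq =>
    induction s using Sym2.ind with
    | _ a b =>
      have hab : G.Adj a b := hs
      have hone : a ∉ U ∨ b ∉ U := by
        by_contra h
        push_neg at h
        exact hU h.1 h.2 hab.ne hab
      obtain ⟨w, hwe, hwU⟩ : ∃ w : V, w ∈ (s(a, b) : Sym2 V) ∧ w ∉ U := by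
        rcases hone with h | h
        · exact ⟨a, by simp, h⟩
        · exact ⟨b, by simp, h⟩
      have hi : i.val = 0 := by
        rcases hrel with h | h
        · simp [gRel] at h
        · exact h
      have hadjw : (GG G).Adj (Sum.inr (Sum.inl (⟨s(a, b), hs⟩, i)))
          (Sum.inl w : GVert G) := by
        rw [GG, SimpleGraph.fromRel_adj]
        exact ⟨by simp, Or.inr ⟨hi, hwe⟩⟩
      have hnm : (Sum.inl w : GVert G) ∉
          (Sum.inl '' U) ∪ Set.range (fun p : G.edgeSet × Fin (2 * Fintype.card V + 1) =>
            (Sum.inr (Sum.inl p) : GVert G)) := by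
        rintro (⟨y, hy, h⟩ | ⟨p, h⟩)
        · rw [Sum.inl.injEq] at h; exact hwU (h ▸ hy)
        · simp at h
      have := huniq _ hadjw hnm
      simp at this
end

section
/- Let G = (V,E) be a finite simple graph with n = |V|, let k be the largest cardinality of an independent set of G, and let 𝒢 be the graph obtained from G by the subdivision-path-apex construction. Then 𝒢 contains a skew stalled subset of cardinality (2n+1)·|E| + k. -/
/-- if `k` is the largest cardinality of an independent set of `G`, then
`𝒢` contains a skew stalled subset of cardinality `(2n+1)·|E| + k`. -/
theorem exists_skewStalled_of_indepNum {V : Type*} [Fintype V] (G : SimpleGraph V) (k : ℕ)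
    (hk : IsGreatest {m | ∃ U : Set V, IndepIn G U ∧ U.ncard = m} k) :
    ∃ S : Set (GVert G), SkewStalled (GG G) S ∧
      S.ncard = (2 * Fintype.card V + 1) * G.edgeSet.ncard + k := by
  obtain ⟨⟨U, hU, hUcard⟩, -⟩ := hk
  set f : G.edgeSet × Fin (2 * Fintype.card V + 1) → GVert G :=
    fun p => Sum.inr (Sum.inl p) with hf
  refine ⟨Sum.inl '' U ∪ Set.range f, ?_, ?_⟩
  · rintro v ⟨hv, u, hadj, huniq⟩
    rw [GG, SimpleGraph.fromRel_adj] at hadj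
    obtain ⟨hne, hrel⟩ := hadj
    match v, u with
    | Sum.inl a, Sum.inl b => rcases hrel with h | h <;> exact h
    | Sum.inl a, Sum.inr (Sum.inr _) => rcases hrel with h | h <;> exact h
    | Sum.inl a, Sum.inr (Sum.inl (e, i)) =>
      rcases hrel with h | h
      · exact h
      obtain ⟨hi0, -⟩ := h
      have hεadj : (GG G).Adj (Sum.inr (Sum.inl (e, i))) (Sum.inr (Sum.inr ())) := by
        rw [GG, SimpleGraph.fromRel_adj]
        exact ⟨by simp, Or.inr hi0⟩
      have hεnot : (Sum.inr (Sum.inr ()) : GVert G) ∉ Sum.inl '' U ∪ Set.range f := by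
        rintro (⟨x, -, hx⟩ | ⟨p, hp⟩)
        · simp at hx
        · simp [hf] at hp
      exact absurd (huniq _ hεadj hεnot) (by simp)
    | Sum.inr (Sum.inl p), u =>
      exact hv (Or.inr ⟨p, rfl⟩)
    | Sum.inr (Sum.inr _), Sum.inl b => rcases hrel with h | h <;> exact h
    | Sum.inr (Sum.inr _), Sum.inr (Sum.inr _) => rcases hrel with h | h <;> exact h
    | Sum.inr (Sum.inr u0), Sum.inr (Sum.inl (e, i)) =>
      rcases hrel with h | h
      · exact h
      have hi0 : i.val = 0 := h
      obtain ⟨x, y, hxy⟩ : ∃ x y, (e : Sym2 V) = s(x, y) := by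
        obtain ⟨e, he⟩ := e
        induction e using Sym2.ind with
        | _ x y => exact ⟨x, y, rfl⟩
      have hadjxy : G.Adj x y := by
        have := e.2
        rw [hxy] at this
        exact this
      -- at least one of x, y is not in U
      have hnot : x ∉ U ∨ y ∉ U := by
        by_contra hc
        push_neg at hc
        exact hU hc.1 hc.2 hadjxy.ne hadjxy
      have key : ∀ z : V, z ∈ (e : Sym2 V) → z ∉ U → False := by
        intro z hz hzU
        have hzadj : (GG G).Adj (Sum.inr (Sum.inl (e, i))) (Sum.inl z) := by
          rw [GG, SimpleGraph.fromRel_adj]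
          exact ⟨by simp, Or.inr ⟨hi0, hz⟩⟩
        have hznot : (Sum.inl z : GVert G) ∉ Sum.inl '' U ∪ Set.range f := by
          rintro (⟨w, hw, hweq⟩ | ⟨p, hp⟩)
          · exact hzU (Sum.inl.inj hweq ▸ hw)
          · simp [hf] at hp
        exact absurd (huniq _ hzadj hznot) (by simp)
      rcases hnot with hx | hy
      · exact key x (by rw [hxy]; simp) hx
      · exact key y (by rw [hxy]; simp) hy
  · have hdisj : Disjoint (Sum.inl '' U : Set (GVert G)) (Set.range f) := by
      rw [Set.disjoint_left]
      rintro x ⟨w, -, rfl⟩ ⟨p, hp⟩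
      simp [hf] at hp
    have hfin : Finite ↥G.edgeSet := inferInstance
    rw [Set.ncard_union_eq hdisj (Set.toFinite _) (Set.toFinite _),
      Set.ncard_image_of_injective _ Sum.inl_injective, hUcard]
    have hinj : Function.Injective f := by
      intro p q hpq
      simpa [hf] using hpq
    have : (Set.range f).ncard = Nat.card (G.edgeSet × Fin (2 * Fintype.card V + 1)) := by
      rw [← Nat.card_coe_set_eq, Nat.card_range_of_injective hinj]
    rw [this, Nat.card_prod, Nat.card_eq_fintype_card (α := Fin _), Fintype.card_fin,
      Nat.card_coe_set_eq]
    ring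
end

section
/- Let G = (V,E) be a finite simple graph with n = |V|, and let 𝒢 be the graph obtained from G by the subdivision-path-apex construction. If a stalled subset 𝒮 of 𝒢 contains e^i and e^{i+1} for some e ∈ E and some 0 ≤ i ≤ 2n−1, then 𝒮 contains all of e^0, e^1, …, e^{2n}. -/
section Helpers
variable {V : Type*} [Fintype V] {G : SimpleGraph V}

lemma adj_path {e : G.edgeSet} {k j : Fin (2*Fintype.card V + 1)}
    (h : (k:ℕ)+1 = (j:ℕ)) :
    (GG G).Adj (Sum.inr (Sum.inl (e,k))) (Sum.inr (Sum.inl (e,j))) := by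
  refine (SimpleGraph.fromRel_adj _ _ _).2 ⟨?_, Or.inl ⟨rfl, h⟩⟩
  simp only [ne_eq, Sum.inr.injEq, Sum.inl.injEq, Prod.mk.injEq]
  rintro ⟨-, rfl⟩; omega

lemma nbr_path {e : G.edgeSet} {k : Fin (2*Fintype.card V + 1)} (hk : (k:ℕ) ≠ 0)
    {w} (h : (GG G).Adj (Sum.inr (Sum.inl (e,k))) w) :
    ∃ m : Fin (2*Fintype.card V + 1), w = Sum.inr (Sum.inl (e,m)) ∧
      ((m:ℕ)+1 = (k:ℕ) ∨ (k:ℕ)+1 = (m:ℕ)) := by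
  rw [GG, SimpleGraph.fromRel_adj] at h
  obtain ⟨hne, h | h⟩ := h
  · rcases w with v | em | u
    · exact h.elim
    · obtain ⟨e', m⟩ := em
      obtain ⟨rfl, hm⟩ := h
      exact ⟨m, rfl, Or.inr hm⟩
    · exact h.elim
  · rcases w with v | em | u
    · exact absurd h.1 hk
    · obtain ⟨e', m⟩ := em
      obtain ⟨rfl, hm⟩ := h
      exact ⟨m, rfl, Or.inl hm⟩
    · exact absurd h hk

lemma step_up {S : Set _} (hS : Stalled (GG G) S) (e : G.edgeSet)
    {k l m : Fin (2*Fintype.card V + 1)} (hkl : (k:ℕ)+1 = (l:ℕ)) (hlm : (l:ℕ)+1 = (m:ℕ))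
    (hk : (Sum.inr (Sum.inl (e,k))) ∈ S) (hl : (Sum.inr (Sum.inl (e,l))) ∈ S) :
    (Sum.inr (Sum.inl (e,m))) ∈ S := by
  by_contra hm
  refine hS (Sum.inr (Sum.inl (e,m))) ⟨hm, Sum.inr (Sum.inl (e,l)), hl, adj_path hlm, ?_⟩
  intro w hw hwS
  obtain ⟨p, rfl, hp | hp⟩ := nbr_path (by omega) hw
  · exact absurd (by rwa [show p = k from Fin.ext (by first | (simp only [Fin.val_mk]; done) | ((try simp only [Fin.val_mk]); omega))]) hwS
  · rw [show p = m from Fin.ext (by first | (simp only [Fin.val_mk]; done) | ((try simp only [Fin.val_mk]); omega))]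

lemma step_down {S : Set _} (hS : Stalled (GG G) S) (e : G.edgeSet)
    {k l m : Fin (2*Fintype.card V + 1)} (hkl : (k:ℕ)+1 = (l:ℕ)) (hlm : (l:ℕ)+1 = (m:ℕ))
    (hl : (Sum.inr (Sum.inl (e,l))) ∈ S) (hm : (Sum.inr (Sum.inl (e,m))) ∈ S) :
    (Sum.inr (Sum.inl (e,k))) ∈ S := by
  by_contra hk
  refine hS (Sum.inr (Sum.inl (e,k)))
    ⟨hk, Sum.inr (Sum.inl (e,l)), hl, ((GG G).adj_symm (adj_path hkl)), ?_⟩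
  intro w hw hwS
  obtain ⟨p, rfl, hp | hp⟩ := nbr_path (by omega) hw
  · rw [show p = k from Fin.ext (by first | (simp only [Fin.val_mk]; done) | ((try simp only [Fin.val_mk]); omega))]
  · exact absurd (by rwa [show p = m from Fin.ext (by first | (simp only [Fin.val_mk]; done) | ((try simp only [Fin.val_mk]); omega))]) hwS


end Helpers

/-- a stalled subset of `𝒢` containing two consecutive path vertices
`e^i, e^{i+1}` contains the whole path `e^0, …, e^{2n}`. -/
theorem stalled_consecutive_path {V : Type*} [Fintype V] (G : SimpleGraph V)
    (S : Set (GVert G)) (hS : Stalled (GG G) S)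
    (e : G.edgeSet) (i j : Fin (2 * Fintype.card V + 1)) (hij : (i : ℕ) + 1 = (j : ℕ))
    (hi : (Sum.inr (Sum.inl (e, i)) : GVert G) ∈ S)
    (hj : (Sum.inr (Sum.inl (e, j)) : GVert G) ∈ S) :
    ∀ t : Fin (2 * Fintype.card V + 1), (Sum.inr (Sum.inl (e, t)) : GVert G) ∈ S := by
  have hjlt := j.isLt
  have up : ∀ d : ℕ, ∀ h : i.val + 1 + d < 2 * Fintype.card V + 1,
      (Sum.inr (Sum.inl (e, (⟨i.val + d, by omega⟩ : Fin (2 * Fintype.card V + 1))))) ∈ S ∧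
      (Sum.inr (Sum.inl (e, (⟨i.val + 1 + d, h⟩ : Fin (2 * Fintype.card V + 1))))) ∈ S := by
    intro d
    induction d with
    | zero =>
      intro h
      constructor
      · rwa [show (⟨i.val + 0, by omega⟩ : Fin (2 * Fintype.card V + 1)) = i from
          Fin.ext (by simp)]
      · rwa [show (⟨i.val + 1 + 0, h⟩ : Fin (2 * Fintype.card V + 1)) = j from
          Fin.ext (by simpa using hij)]
    | succ d ih =>
      intro h
      obtain ⟨h1, h2⟩ := ih (by omega)
      constructor
      · rwa [show (⟨i.val + (d+1), by omega⟩ : Fin (2 * Fintype.card V + 1)) =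
          ⟨i.val + 1 + d, by omega⟩ from Fin.ext (by first | (simp only [Fin.val_mk]; done) | ((try simp only [Fin.val_mk]); omega))]
      · exact step_up hS e (k := ⟨i.val + d, by omega⟩) (l := ⟨i.val + 1 + d, by omega⟩)
          (by first | (simp only [Fin.val_mk]; done) | ((try simp only [Fin.val_mk]); omega)) (by first | (simp only [Fin.val_mk]; done) | ((try simp only [Fin.val_mk]); omega)) h1 h2
  have down : ∀ d : ℕ, d ≤ i.val →
      (Sum.inr (Sum.inl (e, (⟨i.val - d, by omega⟩ : Fin (2 * Fintype.card V + 1))))) ∈ S ∧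
      (Sum.inr (Sum.inl (e, (⟨i.val - d + 1, by omega⟩ : Fin (2 * Fintype.card V + 1))))) ∈ S := by
    intro d
    induction d with
    | zero =>
      intro _
      constructor
      · rwa [show (⟨i.val - 0, by omega⟩ : Fin (2 * Fintype.card V + 1)) = i from
          Fin.ext (by simp)]
      · rwa [show (⟨i.val - 0 + 1, by omega⟩ : Fin (2 * Fintype.card V + 1)) = j from
          Fin.ext (by simpa using hij)]
    | succ d ih =>
      intro hd
      obtain ⟨h1, h2⟩ := ih (by omega)
      constructor
      · exact step_down hS e (l := ⟨i.val - d, by omega⟩) (m := ⟨i.val - d + 1, by omega⟩)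
          (by first | (simp only [Fin.val_mk]; done) | ((try simp only [Fin.val_mk]); omega)) (by first | (simp only [Fin.val_mk]; done) | ((try simp only [Fin.val_mk]); omega)) h1 h2
      · rwa [show (⟨i.val - (d+1) + 1, by omega⟩ : Fin (2 * Fintype.card V + 1)) =
          ⟨i.val - d, by omega⟩ from Fin.ext (by first | (simp only [Fin.val_mk]; done) | ((try simp only [Fin.val_mk]); omega))]
  intro t
  rcases le_or_gt t.val i.val with h | h
  · have := (down (i.val - t.val) (by omega)).1
    rwa [show (⟨i.val - (i.val - t.val), by omega⟩ : Fin (2 * Fintype.card V + 1)) = t from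
      Fin.ext (by first | (simp only [Fin.val_mk]; done) | ((try simp only [Fin.val_mk]); omega))] at this
  · have := (up (t.val - i.val - 1) (by omega)).2
    rwa [show (⟨i.val + 1 + (t.val - i.val - 1), by omega⟩ : Fin (2 * Fintype.card V + 1)) = t
      from Fin.ext (by first | (simp only [Fin.val_mk]; done) | ((try simp only [Fin.val_mk]); omega))] at this
end

section
/- Let G = (V,E) be a finite simple graph with n = |V|, and let 𝒢 be the graph obtained from G by the subdivision-path-apex construction. If 𝒮 is a stalled subset of 𝒢 with |𝒮| ≥ (2n+1)·|E| + 2, then 𝒮 contains e^i for every e ∈ E and every 0 ≤ i ≤ 2n. -/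
section Aux
variable {V : Type*} [Fintype V] {G : SimpleGraph V}

lemma aux_stalled_wit {W : Type*} {H : SimpleGraph W} {F : Set W} (hS : Stalled H F)
    {v u : W} (hv : v ∉ F) (hu : u ∈ F) (ha : H.Adj u v) :
    ∃ w, H.Adj u w ∧ w ∉ F ∧ w ≠ v := by
  by_contra hc
  push_neg at hc
  exact hS v ⟨hv, u, hu, ha, hc⟩

lemma aux_nbr_path (e : G.edgeSet) (j : Fin (2 * Fintype.card V + 1)) (hj : 0 < j.val)
    (w : GVert G) (hw : (GG G).Adj (Sum.inr (Sum.inl (e, j))) w) :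
    ∃ j' : Fin (2 * Fintype.card V + 1), w = Sum.inr (Sum.inl (e, j')) ∧
      (j'.val + 1 = j.val ∨ j.val + 1 = j'.val) := by
  rcases hw with ⟨hne, h | h⟩
  · rcases w with v | ⟨⟨e', j'⟩ | u⟩
    · simp [gRel] at h
    · simp only [gRel] at h
      exact ⟨j', by rw [h.1], Or.inr h.2⟩
    · simp [gRel] at h
  · rcases w with v | ⟨⟨e', j'⟩ | u⟩
    · simp only [gRel] at h
      omega
    · simp only [gRel] at h
      exact ⟨j', by rw [h.1], Or.inl h.2⟩
    · simp only [gRel] at h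
      omega

lemma aux_adj_succ (e : G.edgeSet) (j j' : Fin (2 * Fintype.card V + 1))
    (h : j.val + 1 = j'.val) :
    (GG G).Adj (Sum.inr (Sum.inl (e, j))) (Sum.inr (Sum.inl (e, j'))) := by
  refine ⟨?_, Or.inl ⟨rfl, h⟩⟩
  intro hEq
  have : j = j' := by
    have := Sum.inr.inj hEq
    have := Sum.inl.inj this
    exact (Prod.mk.injEq _ _ _ _ ▸ this).2
  omega

lemma aux_step_down {S : Set (GVert G)} (hS : Stalled (GG G) S) (e : G.edgeSet)
    (j : Fin (2 * Fintype.card V + 1)) (hj : 2 ≤ j.val)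
    (h : (Sum.inr (Sum.inl (e, j)) : GVert G) ∉ S) :
    ∃ j' : Fin (2 * Fintype.card V + 1),
      (Sum.inr (Sum.inl (e, j')) : GVert G) ∉ S ∧
      (j'.val + 1 = j.val ∨ j'.val + 2 = j.val) := by
  have hlt := j.isLt
  set j1 : Fin (2 * Fintype.card V + 1) := ⟨j.val - 1, by omega⟩ with hj1
  by_cases h1 : (Sum.inr (Sum.inl (e, j1)) : GVert G) ∈ S
  · have hadj : (GG G).Adj (Sum.inr (Sum.inl (e, j1))) (Sum.inr (Sum.inl (e, j))) :=
      aux_adj_succ e j1 j (by simp [hj1]; omega)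
    obtain ⟨w, hw, hwS, hwne⟩ := aux_stalled_wit hS h h1 hadj
    obtain ⟨j', hj', hcase⟩ := aux_nbr_path e j1 (by simp [hj1]; omega) w hw
    subst hj'
    rcases hcase with hc | hc
    · exact ⟨j', hwS, Or.inr (by simp [hj1] at hc; omega)⟩
    · exfalso
      apply hwne
      have : j' = j := Fin.ext (by simp [hj1] at hc; omega)
      rw [this]
  · exact ⟨j1, h1, Or.inl (by simp [hj1]; omega)⟩

lemma aux_up {S : Set (GVert G)} (hS : Stalled (GG G) S) (e : G.edgeSet) :
    ∀ k (j : Fin (2 * Fintype.card V + 1)), 2 * Fintype.card V - j.val ≤ k →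
      (Sum.inr (Sum.inl (e, j)) : GVert G) ∉ S →
      (Sum.inr (Sum.inl (e, ⟨2 * Fintype.card V, by omega⟩)) : GVert G) ∉ S := by
  intro k
  induction k with
  | zero =>
    intro j hk h
    have hlt := j.isLt
    have : j = ⟨2 * Fintype.card V, by omega⟩ := Fin.ext (by simp; omega)
    rwa [← this]
  | succ k ih =>
    intro j hk h
    have hlt := j.isLt
    by_cases hend : j.val = 2 * Fintype.card V
    · have : j = ⟨2 * Fintype.card V, by omega⟩ := Fin.ext (by simp; omega)
      rwa [← this]
    · set j1 : Fin (2 * Fintype.card V + 1) := ⟨j.val + 1, by omega⟩ with hj1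
      by_cases h1 : (Sum.inr (Sum.inl (e, j1)) : GVert G) ∈ S
      · have hadj : (GG G).Adj (Sum.inr (Sum.inl (e, j1))) (Sum.inr (Sum.inl (e, j))) := by
          have := aux_adj_succ e j j1 (by simp [hj1])
          exact this.symm
        obtain ⟨w, hw, hwS, hwne⟩ := aux_stalled_wit hS h h1 hadj
        obtain ⟨j', hj', hcase⟩ := aux_nbr_path e j1 (by simp [hj1]) w hw
        subst hj'
        rcases hcase with hc | hc
        · exfalso
          apply hwne
          have : j' = j := Fin.ext (by simp [hj1] at hc; omega)
          rw [this]
        · have hj'lt := j'.isLt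
          exact ih j' (by simp [hj1] at hc; omega) hwS
      · exact ih j1 (by simp [hj1]; omega) h1
end Aux


/-- a stalled subset of `𝒢` of cardinality at least `(2n+1)·|E| + 2`
contains all path vertices `e^i`. -/
theorem stalled_large_contains_paths {V : Type*} [Fintype V] (G : SimpleGraph V)
    (S : Set (GVert G)) (hS : Stalled (GG G) S)
    (hcard : (2 * Fintype.card V + 1) * G.edgeSet.ncard + 2 ≤ S.ncard) :
    ∀ (e : G.edgeSet) (i : Fin (2 * Fintype.card V + 1)),
      (Sum.inr (Sum.inl (e, i)) : GVert G) ∈ S := by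
  intro e i
  by_contra hi
  have hpos : 0 < Fintype.card V := Fintype.card_pos_iff.mpr ⟨(Quot.out e.val).1⟩
  -- top vertex is empty
  have htop : (Sum.inr (Sum.inl (e, ⟨2 * Fintype.card V, by omega⟩)) : GVert G) ∉ S :=
    aux_up hS e (2 * Fintype.card V) i (by omega) hi
  -- blocks: for each d < card V there is an empty path vertex in the d-th block from the top
  have blocks : ∀ d, d < Fintype.card V → ∃ j : Fin (2 * Fintype.card V + 1),
      (Sum.inr (Sum.inl (e, j)) : GVert G) ∉ S ∧
      (j.val = 2 * (Fintype.card V - 1 - d) + 1 ∨ j.val = 2 * (Fintype.card V - 1 - d) + 2) := by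
    intro d
    induction d with
    | zero =>
      intro _
      exact ⟨⟨2 * Fintype.card V, by omega⟩, htop, Or.inr (by simp; omega)⟩
    | succ d ih =>
      intro hd
      obtain ⟨j, hjS, hjv⟩ := ih (by omega)
      have h2 : 2 ≤ j.val := by omega
      obtain ⟨j', hj'S, hj'v⟩ := aux_step_down hS e j h2 hjS
      rcases hjv with hv | hv
      · exact ⟨j', hj'S, by omega⟩
      · rcases hj'v with hv' | hv'
        · have h2' : 2 ≤ j'.val := by omega
          obtain ⟨j'', hj''S, hj''v⟩ := aux_step_down hS e j' h2' hj'S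
          exact ⟨j'', hj''S, by omega⟩
        · exact ⟨j', hj'S, by omega⟩
  have key : ∀ d : Fin (Fintype.card V), ∃ j : Fin (2 * Fintype.card V + 1),
      (Sum.inr (Sum.inl (e, j)) : GVert G) ∉ S ∧
      (j.val = 2 * (Fintype.card V - 1 - d.val) + 1 ∨
        j.val = 2 * (Fintype.card V - 1 - d.val) + 2) :=
    fun d => blocks d.val d.isLt
  choose f hf1 hf2 using key
  have hinj : Function.Injective
      (fun d : Fin (Fintype.card V) => (Sum.inr (Sum.inl (e, f d)) : GVert G)) := by
    intro a b hab
    simp only [Sum.inr.injEq, Sum.inl.injEq, Prod.mk.injEq] at hab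
    have hfa := hf2 a
    have hfb := hf2 b
    have hv : (f a).val = (f b).val := by rw [hab.2]
    have ha := a.isLt
    have hb := b.isLt
    exact Fin.ext (by omega)
  classical
  set T : Finset (GVert G) := Finset.image
    (fun d : Fin (Fintype.card V) => (Sum.inr (Sum.inl (e, f d)) : GVert G)) Finset.univ with hT
  have hTcard : T.card = Fintype.card V := by
    rw [hT, Finset.card_image_of_injective _ hinj, Finset.card_univ, Fintype.card_fin]
  have hTdisj : Disjoint S (↑T : Set (GVert G)) := by
    rw [Set.disjoint_right]
    intro x hx
    simp only [hT, Finset.coe_image, Finset.coe_univ, Set.image_univ, Set.mem_range] at hx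
    obtain ⟨d, rfl⟩ := hx
    exact hf1 d
  have hfin : Finite (GVert G) := by infer_instance
  have hcardU : Nat.card (GVert G) =
      Fintype.card V + G.edgeSet.ncard * (2 * Fintype.card V + 1) + 1 := by
    rw [Nat.card_sum, Nat.card_sum, Nat.card_prod, Nat.card_eq_fintype_card (α := V),
      Nat.card_eq_fintype_card (α := Fin (2 * Fintype.card V + 1)), Fintype.card_fin,
      Nat.card_coe_set_eq, Nat.card_unique]
    ring
  have hunion : (S ∪ ↑T).ncard = S.ncard + Fintype.card V := by
    rw [Set.ncard_union_eq hTdisj (Set.toFinite S) (Set.toFinite _), Set.ncard_coe_finset, hTcard]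
  have hle : (S ∪ ↑T).ncard ≤ Nat.card (GVert G) := by
    rw [← Set.ncard_univ]
    exact Set.ncard_le_ncard (Set.subset_univ _) (Set.toFinite _)
  rw [hunion, hcardU] at hle
  have hmm : (2 * Fintype.card V + 1) * G.edgeSet.ncard
      = G.edgeSet.ncard * (2 * Fintype.card V + 1) := Nat.mul_comm _ _
  rw [hmm] at hcard
  omega
end

section
/- Let G = (V,E) be a connected finite simple graph with n = |V|, and let 𝒢 be the graph obtained from G by the subdivision-path-apex construction. If 𝒮 is a proper stalled subset of 𝒢 with |𝒮| ≥ (2n+1)·|E| + 2, then ε ∉ 𝒮. -/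
/-!
Suppose `ε ∈ S`. As `𝒢` has `n + (2n+1)|E| + 1` vertices, fewer than `n` of them are empty.
On a path `e^0 … e^{2n}`, a filled vertex `e^{i+1}` makes its two path neighbours both filled or
both empty, so two consecutive filled vertices fill the whole path; one of the `n` disjoint pairs
`{e^{2k+1}, e^{2k+2}}` has no empty vertex, hence every path is filled. Then `e^0`, whose other
neighbours are filled, transmits fillings between the two ends of `e`. By connectedness, the empty
vertex of `G` that exists because `S` is proper makes all `n` vertices of `G` empty: too many.
-/

theorem Stalled.mem_of_adj {W : Type*} {H : SimpleGraph W} {F : Set W} (hF : Stalled H F)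
    {u v : W} (hu : u ∈ F) (huv : H.Adj u v) (hothers : ∀ w, H.Adj u w → w ≠ v → w ∈ F) :
    v ∈ F := by
  by_contra hv
  exact hF v ⟨hv, u, hu, huv, fun w huw hw => by_contra fun hwv => hw (hothers w huw hwv)⟩

theorem Set.card_le_ncard_of_injective {α β : Type*} [Finite β] {f : α → β}
    (hf : Function.Injective f) {t : Set β} (ht : ∀ a, f a ∈ t) : Nat.card α ≤ t.ncard := by
  rw [← Set.ncard_range_of_injective hf]
  exact Set.ncard_le_ncard (Set.range_subset_iff.2 ht)

theorem Nat.iff_zero_of_iff_succ {p : ℕ → Prop} {m : ℕ} (h : ∀ i < m, p i ↔ p (i + 1)) :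
    ∀ i ≤ m, p i ↔ p 0
  | 0, _ => Iff.rfl
  | i + 1, hi => (h i (by omega)).symm.trans (Nat.iff_zero_of_iff_succ h i (by omega))

section SubdivisionPathApex

variable {V : Type*} [Fintype V] {G : SimpleGraph V}

abbrev pathVert (e : G.edgeSet) (i : Fin (2 * Fintype.card V + 1)) : GVert G :=
  Sum.inr (Sum.inl (e, i))

abbrev apex (G : SimpleGraph V) : GVert G := Sum.inr (Sum.inr ())

theorem card_gVert :
    Nat.card (GVert G) = Fintype.card V + (2 * Fintype.card V + 1) * G.edgeSet.ncard + 1 := by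
  simp [Nat.card_sum, Nat.card_prod, Nat.card_coe_set_eq, add_assoc, mul_comm]

namespace GG

theorem adj_iff {a b : GVert G} : (GG G).Adj a b ↔ a ≠ b ∧ (gRel G a b ∨ gRel G b a) :=
  SimpleGraph.fromRel_adj _ _ _

theorem adj_pathVert_pathVert {e : G.edgeSet} {i j : Fin (2 * Fintype.card V + 1)}
    (h : i.val + 1 = j.val) : (GG G).Adj (pathVert e i) (pathVert e j) :=
  adj_iff.2 ⟨fun hij => by simp_all, Or.inl ⟨rfl, h⟩⟩

theorem adj_inl_pathVert {v : V} {e : G.edgeSet} (hv : v ∈ (e : Sym2 V))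
    {i : Fin (2 * Fintype.card V + 1)} (hi : i.val = 0) : (GG G).Adj (Sum.inl v) (pathVert e i) :=
  adj_iff.2 ⟨by simp, Or.inl ⟨hi, hv⟩⟩

theorem adj_pathVert_cases {e : G.edgeSet} {i : Fin (2 * Fintype.card V + 1)} {w : GVert G}
    (h : (GG G).Adj (pathVert e i) w) :
    (∃ j, w = pathVert e j ∧ (i.val + 1 = j.val ∨ j.val + 1 = i.val)) ∨
      (i.val = 0 ∧ (w = apex G ∨ ∃ v ∈ (e : Sym2 V), w = Sum.inl v)) := by
  obtain ⟨-, hrel⟩ := adj_iff.1 h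
  rcases w with v | ⟨e', j⟩ | ⟨⟩
  · simp only [gRel, false_or] at hrel
    exact Or.inr ⟨hrel.1, Or.inr ⟨v, hrel.2, rfl⟩⟩
  · rcases hrel with ⟨rfl, hij⟩ | ⟨rfl, hji⟩
    · exact Or.inl ⟨j, rfl, Or.inl hij⟩
    · exact Or.inl ⟨j, rfl, Or.inr hji⟩
  · simp only [gRel, false_or] at hrel
    exact Or.inr ⟨hrel, Or.inl rfl⟩

end GG

/-- Indices beyond `2n` count as filled, so that the pendant end `e^{2n}` obeys the same forcing
rule as the inner vertices of the path. -/
def PathFilled (S : Set (GVert G)) (e : G.edgeSet) (i : ℕ) : Prop :=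
  ∀ h : i < 2 * Fintype.card V + 1, pathVert e ⟨i, h⟩ ∈ S

variable {S : Set (GVert G)} {e : G.edgeSet}

theorem Stalled.pathFilled_iff (hS : Stalled (GG G) S) {i : ℕ}
    (hi : i + 1 < 2 * Fintype.card V + 1) (hmid : PathFilled S e (i + 1)) :
    PathFilled S e i ↔ PathFilled S e (i + 2) := by
  have hu : pathVert e ⟨i + 1, hi⟩ ∈ S := hmid hi
  have hnbr : ∀ w, (GG G).Adj (pathVert e ⟨i + 1, hi⟩) w →
      ∃ j : Fin (2 * Fintype.card V + 1), w = pathVert e j ∧ (j.val = i ∨ j.val = i + 2) := by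
    intro w hw
    rcases GG.adj_pathVert_cases hw with ⟨j, rfl, hj⟩ | ⟨h0, -⟩
    · simp only at hj
      exact ⟨j, rfl, by omega⟩
    · exact absurd h0 (Nat.succ_ne_zero i)
  constructor
  · intro hlow hlt
    refine hS.mem_of_adj hu (GG.adj_pathVert_pathVert rfl) fun w hw hne => ?_
    obtain ⟨j, rfl, hj | hj⟩ := hnbr w hw
    · exact (hj ▸ hlow) j.isLt
    · exact absurd (congrArg (pathVert e) (Fin.ext hj)) hne
  · intro hhigh hlt
    refine hS.mem_of_adj hu (GG.adj_pathVert_pathVert rfl).symm fun w hw hne => ?_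
    obtain ⟨j, rfl, hj | hj⟩ := hnbr w hw
    · exact absurd (congrArg (pathVert e) (Fin.ext hj)) hne
    · exact (hj ▸ hhigh) j.isLt

theorem Stalled.pathFilled_pair_iff (hS : Stalled (GG G) S) {i : ℕ}
    (hi : i < 2 * Fintype.card V) :
    PathFilled S e i ∧ PathFilled S e (i + 1) ↔
      PathFilled S e (i + 1) ∧ PathFilled S e (i + 2) := by
  constructor
  · rintro ⟨h0, h1⟩
    exact ⟨h1, (hS.pathFilled_iff (by omega) h1).1 h0⟩
  · rintro ⟨h1, h2⟩
    exact ⟨(hS.pathFilled_iff (by omega) h1).2 h2, h1⟩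

theorem Stalled.pathVert_mem_of_pathFilled_pair (hS : Stalled (GG G) S) {j : ℕ}
    (hj : j < 2 * Fintype.card V) (hpair : PathFilled S e j ∧ PathFilled S e (j + 1))
    (i : Fin (2 * Fintype.card V + 1)) : pathVert e i ∈ S := by
  have hzero := Nat.iff_zero_of_iff_succ (p := fun k => PathFilled S e k ∧ PathFilled S e (k + 1))
    fun k hk => hS.pathFilled_pair_iff hk
  exact ((hzero i (by omega)).2 ((hzero j hj.le).1 hpair)).1 i.isLt

theorem exists_pathFilled_pair (hsmall : Sᶜ.ncard < Fintype.card V) (e : G.edgeSet) :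
    ∃ k < Fintype.card V, PathFilled S e (2 * k + 1) ∧ PathFilled S e (2 * k + 2) := by
  by_contra! hno
  have hempty : ∀ k : Fin (Fintype.card V), ∃ j : Fin (2 * Fintype.card V + 1),
      (j.val - 1) / 2 = k ∧ pathVert e j ∉ S := by
    intro k
    by_cases h1 : PathFilled S e (2 * k + 1)
    · obtain ⟨hlt, hj⟩ := not_forall.1 (hno k k.isLt h1)
      exact ⟨⟨_, hlt⟩, by simp only; omega, hj⟩
    · obtain ⟨hlt, hj⟩ := not_forall.1 h1
      exact ⟨⟨_, hlt⟩, by simp only; omega, hj⟩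
  choose f hf using hempty
  have hinj : Function.Injective fun k => pathVert e (f k) := fun k l hkl => by
    have hk := (hf k).1
    have hl := (hf l).1
    simp only [Sum.inr.injEq, Sum.inl.injEq, Prod.mk.injEq, true_and] at hkl
    ext
    omega
  have := Set.card_le_ncard_of_injective hinj (t := Sᶜ) fun k => (hf k).2
  rw [Nat.card_fin] at this
  omega

theorem Stalled.pathVert_mem (hS : Stalled (GG G) S) (hsmall : Sᶜ.ncard < Fintype.card V)
    (e : G.edgeSet) (i : Fin (2 * Fintype.card V + 1)) : pathVert e i ∈ S := by
  obtain ⟨k, hk, hpair⟩ := exists_pathFilled_pair hsmall e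
  exact hS.pathVert_mem_of_pathFilled_pair (by omega) hpair i

theorem Stalled.inl_mem_of_adj (hS : Stalled (GG G) S) (hpath : ∀ e i, pathVert e i ∈ S)
    (hε : apex G ∈ S) {a b : V} (hab : G.Adj a b) (ha : Sum.inl a ∈ S) : Sum.inl b ∈ S := by
  let e : G.edgeSet := ⟨s(a, b), hab⟩
  refine hS.mem_of_adj (hpath e 0) (GG.adj_inl_pathVert (by simp [e]) rfl).symm
    fun w hw hne => ?_
  rcases GG.adj_pathVert_cases hw with ⟨j, rfl, -⟩ | ⟨-, rfl | ⟨v, hv, rfl⟩⟩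
  · exact hpath e j
  · exact hε
  · rcases Sym2.mem_iff.1 hv with rfl | rfl
    · exact ha
    · exact absurd rfl hne

theorem Stalled.inl_mem_of_reachable (hS : Stalled (GG G) S) (hpath : ∀ e i, pathVert e i ∈ S)
    (hε : apex G ∈ S) {a b : V} (hab : G.Reachable a b) : Sum.inl a ∈ S → Sum.inl b ∈ S := by
  obtain ⟨p⟩ := hab
  induction p with
  | nil => exact id
  | cons h _ ih => exact ih ∘ hS.inl_mem_of_adj hpath hε h

theorem ncard_compl_lt_of_le_ncard
    (hcard : (2 * Fintype.card V + 1) * G.edgeSet.ncard + 2 ≤ S.ncard) :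
    Sᶜ.ncard < Fintype.card V := by
  have htotal := Set.ncard_add_ncard_compl S
  rw [card_gVert] at htotal
  omega

end SubdivisionPathApex

/-- for connected `G`, a proper stalled subset of `𝒢` of cardinality at
least `(2n+1)·|E| + 2` does not contain `ε`. -/
theorem stalled_large_not_mem_eps {V : Type*} [Fintype V] (G : SimpleGraph V)
    (hG : G.Connected) (S : Set (GVert G)) (hS : Stalled (GG G) S)
    (hproper : S ≠ Set.univ)
    (hcard : (2 * Fintype.card V + 1) * G.edgeSet.ncard + 2 ≤ S.ncard) :
    (Sum.inr (Sum.inr ()) : GVert G) ∉ S := by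
  intro hε
  have hsmall := ncard_compl_lt_of_le_ncard hcard
  have hpath := hS.pathVert_mem hsmall
  obtain ⟨v, hv⟩ : ∃ v : V, Sum.inl v ∉ S := by
    obtain ⟨x, hx⟩ := Set.ne_univ_iff_exists_notMem S |>.mp hproper
    rcases x with v | ⟨e, i⟩ | ⟨⟩
    · exact ⟨v, hx⟩
    · exact absurd (hpath e i) hx
    · exact absurd hε hx
  have hall : ∀ w : V, Sum.inl w ∈ Sᶜ := fun w hw =>
    hv (hS.inl_mem_of_reachable hpath hε (hG.preconnected w v) hw)
  have := Set.card_le_ncard_of_injective Sum.inl_injective hall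
  rw [Nat.card_eq_fintype_card] at this
  omega
end

section
/- Let G = (V,E) be a connected finite simple graph with n = |V|, and let 𝒢 be the graph obtained from G by the subdivision-path-apex construction. If 𝒮 is a proper stalled subset of 𝒢 with |𝒮| ≥ (2n+1)·|E| + 2, then 𝒮 ∩ V is an independent set of G. -/
set_option maxHeartbeats 1000000

section Aux
variable {V : Type*} [Fintype V] (G : SimpleGraph V)

def pv (e : G.edgeSet) (i : Fin (2 * Fintype.card V + 1)) : GVert G := Sum.inr (Sum.inl (e, i))
def eps : GVert G := Sum.inr (Sum.inr ())

lemma gg_adj (a b : GVert G) : (GG G).Adj a b ↔ a ≠ b ∧ (gRel G a b ∨ gRel G b a) := by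
  simp [GG, SimpleGraph.fromRel_adj]

lemma pv_inj {e f : G.edgeSet} {i j : Fin (2 * Fintype.card V + 1)}
    (h : pv G e i = pv G f j) : e = f ∧ i = j := by
  simpa [pv, Prod.ext_iff] using h

lemma adj_pv {e : G.edgeSet} {i : Fin (2 * Fintype.card V + 1)} {x : GVert G}
    (h : (GG G).Adj (pv G e i) x) :
    (∃ j, x = pv G e j ∧ (i.val + 1 = j.val ∨ j.val + 1 = i.val)) ∨
    (i.val = 0 ∧ (x = eps G ∨ ∃ v, x = Sum.inl v ∧ v ∈ (e : Sym2 V))) := by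
  rw [gg_adj] at h
  obtain ⟨hne, h | h⟩ := h
  · match x with
    | Sum.inl v => simp [gRel, pv] at h
    | Sum.inr (Sum.inl (f, j)) =>
        obtain ⟨rfl, hij⟩ := h
        exact Or.inl ⟨j, rfl, Or.inl hij⟩
    | Sum.inr (Sum.inr u) => simp [gRel, pv] at h
  · match x with
    | Sum.inl v =>
        obtain ⟨hi, hv⟩ := h
        exact Or.inr ⟨hi, Or.inr ⟨v, rfl, hv⟩⟩
    | Sum.inr (Sum.inl (f, j)) =>
        obtain ⟨rfl, hij⟩ := h
        exact Or.inl ⟨j, rfl, Or.inr hij⟩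
    | Sum.inr (Sum.inr u) =>
        exact Or.inr ⟨h, Or.inl rfl⟩

lemma adj_pv_succ (e : G.edgeSet) (i j : Fin (2 * Fintype.card V + 1))
    (h : i.val + 1 = j.val) : (GG G).Adj (pv G e i) (pv G e j) := by
  rw [gg_adj]
  constructor
  · intro hc
    obtain ⟨-, rfl⟩ := pv_inj G hc
    omega
  · exact Or.inl ⟨rfl, h⟩

lemma adj_pv0_eps (e : G.edgeSet) (i : Fin (2 * Fintype.card V + 1)) (h : i.val = 0) :
    (GG G).Adj (pv G e i) (eps G) := by
  rw [gg_adj]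
  exact ⟨by simp [pv, eps], Or.inr h⟩

lemma adj_pv0_inl (e : G.edgeSet) (i : Fin (2 * Fintype.card V + 1)) (h : i.val = 0)
    {v : V} (hv : v ∈ (e : Sym2 V)) : (GG G).Adj (pv G e i) (Sum.inl v) := by
  rw [gg_adj]
  exact ⟨by simp [pv], Or.inr ⟨h, hv⟩⟩

lemma exists_other {S : Set (GVert G)} (hS : Stalled (GG G) S) {u v : GVert G}
    (hu : u ∈ S) (hv : v ∉ S) (hadj : (GG G).Adj u v) :
    ∃ w, (GG G).Adj u w ∧ w ∉ S ∧ w ≠ v := by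
  by_contra h
  push_neg at h
  exact hS v ⟨hv, u, hu, hadj, fun w hw hws => h w hw hws⟩

lemma top_empty {S : Set (GVert G)} (hS : Stalled (GG G) S) (e : G.edgeSet) :
    ∀ d k (hkd : k + d = 2 * Fintype.card V),
      pv G e ⟨k, by omega⟩ ∉ S → pv G e ⟨2 * Fintype.card V, by omega⟩ ∉ S := by
  intro d
  induction d using Nat.strong_induction_on with
  | _ d ih =>
    intro k hkd h
    rcases Nat.eq_zero_or_pos d with rfl | hd
    · have hk : k = 2 * Fintype.card V := by omega
      subst hk; exact h
    · by_cases h1 : pv G e ⟨k + 1, by omega⟩ ∈ S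
      · obtain ⟨w, hadj, hw, hne⟩ :=
          exists_other G hS h1 h (adj_pv_succ G e ⟨k, by omega⟩ ⟨k+1, by omega⟩ rfl).symm
        rcases adj_pv G hadj with ⟨j, rfl, hj | hj⟩ | ⟨h0, -⟩
        · have hjlt := j.isLt
          have hj' : k + 1 + 1 = j.val := hj
          have hj2 : j = ⟨k + 2, by omega⟩ := Fin.ext (show j.val = k + 2 by omega)
          rw [hj2] at hw
          exact ih (d - 2) (by omega) (k + 2) (by omega) hw
        · have hj' : j.val + 1 = k + 1 := hj
          exact absurd (by
            have : j = ⟨k, by omega⟩ := Fin.ext (show j.val = k by omega)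
            rw [this]) hne
        · exact absurd h0 (by simp)
      · exact ih (d - 1) (by omega) (k + 1) (by omega) h1

lemma no_two_filled {S : Set (GVert G)} (hS : Stalled (GG G) S) (e : G.edgeSet)
    (htop : pv G e ⟨2 * Fintype.card V, by omega⟩ ∉ S) :
    ∀ d k (hkd : k + 1 + d = 2 * Fintype.card V),
      ¬(pv G e ⟨k, by omega⟩ ∈ S ∧ pv G e ⟨k + 1, by omega⟩ ∈ S) := by
  intro d
  induction d with
  | zero =>
    rintro k hk ⟨h1, h2⟩
    have heq : (⟨k + 1, by omega⟩ : Fin (2 * Fintype.card V + 1)) = ⟨2 * Fintype.card V, by omega⟩ :=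
      Fin.ext (by simp; omega)
    rw [heq] at h2
    exact htop h2
  | succ d ih =>
    rintro k hk ⟨h1, h2⟩
    have h3 : pv G e ⟨k + 2, by omega⟩ ∉ S := fun hc => ih (k + 1) (by omega) ⟨h2, hc⟩
    obtain ⟨w, hadj, hw, hne⟩ :=
      exists_other G hS h2 h3 (adj_pv_succ G e ⟨k + 1, by omega⟩ ⟨k + 2, by omega⟩ rfl)
    rcases adj_pv G hadj with ⟨j, rfl, hj | hj⟩ | ⟨h0, -⟩
    · have hj' : k + 1 + 1 = j.val := hj
      exact hne (by
        have : j = ⟨k + 2, by omega⟩ := Fin.ext (show j.val = k + 2 by omega)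
        rw [this])
    · have hj' : j.val + 1 = k + 1 := hj
      have : j = ⟨k, by omega⟩ := Fin.ext (show j.val = k by omega)
      rw [this] at hw
      exact hw h1
    · exact absurd h0 (by simp)

lemma path_filled {S : Set (GVert G)} (hS : Stalled (GG G) S)
    (hsize : Sᶜ.ncard + 1 ≤ Fintype.card V) (e : G.edgeSet)
    (i : Fin (2 * Fintype.card V + 1)) : pv G e i ∈ S := by
  classical
  by_contra h
  have hi : (⟨i.val, i.isLt⟩ : Fin (2 * Fintype.card V + 1)) = i := rfl
  have htop : pv G e ⟨2 * Fintype.card V, by omega⟩ ∉ S := by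
    refine top_empty G hS e (2 * Fintype.card V - i.val) i.val (by have := i.isLt; omega) ?_
    rw [show (⟨i.val, by have := i.isLt; omega⟩ : Fin (2 * Fintype.card V + 1)) = i from Fin.ext rfl]
    exact h
  have hpair : ∀ j : Fin (Fintype.card V),
      pv G e ⟨2 * j.val, by have := j.isLt; omega⟩ ∉ S ∨
      pv G e ⟨2 * j.val + 1, by have := j.isLt; omega⟩ ∉ S := by
    intro j
    by_contra hc
    push_neg at hc
    exact no_two_filled G hS e htop (2 * Fintype.card V - (2 * j.val + 1)) (2 * j.val)
      (by have := j.isLt; omega) ⟨hc.1, hc.2⟩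
  have hchoice : ∀ j : Fin (Fintype.card V), ∃ m : Fin (2 * Fintype.card V + 1),
      pv G e m ∉ S ∧ (m.val = 2 * j.val ∨ m.val = 2 * j.val + 1) := by
    intro j
    rcases hpair j with h' | h'
    · exact ⟨_, h', Or.inl rfl⟩
    · exact ⟨_, h', Or.inr rfl⟩
  choose m hm1 hm2 using hchoice
  have hginj : Function.Injective (fun j => (⟨pv G e (m j), hm1 j⟩ : ↥Sᶜ)) := by
    intro a b hab
    have hval := congrArg Subtype.val hab
    obtain ⟨-, hm⟩ := pv_inj G hval
    have h2a := hm2 a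
    have h2b := hm2 b
    have hvv : (m a).val = (m b).val := congrArg Fin.val hm
    exact Fin.ext (by omega)
  have hcard : Fintype.card V ≤ Sᶜ.ncard :=
    calc Fintype.card V = Nat.card (Fin (Fintype.card V)) := by simp
      _ ≤ Nat.card ↥Sᶜ := Nat.card_le_card_of_injective _ hginj
      _ = Sᶜ.ncard := Nat.card_coe_set_eq _
  omega


lemma eps_filled {S : Set (GVert G)} (hS : Stalled (GG G) S)
    (hsize : Sᶜ.ncard + 1 ≤ Fintype.card V) {u v : V} (huv : G.Adj u v)
    (hu : (Sum.inl u : GVert G) ∈ S) (hv : (Sum.inl v : GVert G) ∈ S) : eps G ∈ S := by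
  by_contra heps
  set e : G.edgeSet := ⟨s(u, v), huv⟩ with he
  obtain ⟨w, hadj, hw, hne⟩ := exists_other G hS (path_filled G hS hsize e ⟨0, by omega⟩)
    heps (adj_pv0_eps G e ⟨0, by omega⟩ rfl)
  rcases adj_pv G hadj with ⟨j, rfl, -⟩ | ⟨-, rfl | ⟨x, rfl, hx⟩⟩
  · exact hw (path_filled G hS hsize e j)
  · exact hne rfl
  · have : x = u ∨ x = v := Sym2.mem_iff.mp hx
    rcases this with rfl | rfl
    · exact hw hu
    · exact hw hv

lemma empty_spreads {S : Set (GVert G)} (hS : Stalled (GG G) S)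
    (hsize : Sᶜ.ncard + 1 ≤ Fintype.card V) (heps : eps G ∈ S) {a c : V}
    (hadj : G.Adj a c) (ha : (Sum.inl a : GVert G) ∉ S) : (Sum.inl c : GVert G) ∉ S := by
  intro hc
  set f : G.edgeSet := ⟨s(a, c), hadj⟩ with hf
  have hmem : a ∈ (f : Sym2 V) := Sym2.mem_mk_left a c
  obtain ⟨w, hadjw, hw, hne⟩ := exists_other G hS (path_filled G hS hsize f ⟨0, by omega⟩)
    ha (adj_pv0_inl G f ⟨0, by omega⟩ rfl hmem)
  rcases adj_pv G hadjw with ⟨j, rfl, -⟩ | ⟨-, rfl | ⟨x, rfl, hx⟩⟩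
  · exact hw (path_filled G hS hsize f j)
  · exact hw heps
  · have : x = a ∨ x = c := Sym2.mem_iff.mp hx
    rcases this with rfl | rfl
    · exact hne rfl
    · exact hw hc

lemma spread_walk {S : Set (GVert G)} (hS : Stalled (GG G) S)
    (hsize : Sᶜ.ncard + 1 ≤ Fintype.card V) (heps : eps G ∈ S) {a b : V}
    (p : G.Walk a b) (ha : (Sum.inl a : GVert G) ∉ S) : (Sum.inl b : GVert G) ∉ S := by
  induction p with
  | nil => exact ha
  | cons h p ih => exact ih (empty_spreads G hS hsize heps h ha)

end Aux

/-- for connected `G`, a proper stalled subset of `𝒢` of cardinality at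
least `(2n+1)·|E| + 2` meets `V` in an independent set of `G`. -/
theorem stalled_large_inter_indep {V : Type*} [Fintype V] (G : SimpleGraph V)
    (hG : G.Connected) (S : Set (GVert G)) (hS : Stalled (GG G) S)
    (hproper : S ≠ Set.univ)
    (hcard : (2 * Fintype.card V + 1) * G.edgeSet.ncard + 2 ≤ S.ncard) :
    IndepIn G {v : V | (Sum.inl v : GVert G) ∈ S} := by
  classical
  intro u hu v hv hne hadj
  have hu' : (Sum.inl u : GVert G) ∈ S := hu
  have hv' : (Sum.inl v : GVert G) ∈ S := hv
  have htot : Nat.card (GVert G) =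
      Fintype.card V + ((2 * Fintype.card V + 1) * G.edgeSet.ncard + 1) := by
    rw [Nat.card_sum, Nat.card_sum, Nat.card_prod, Nat.card_coe_set_eq]
    simp [Nat.card_eq_fintype_card]
    ring
  have hcompl : S.ncard + Sᶜ.ncard = Nat.card (GVert G) := Set.ncard_add_ncard_compl S
  have hsize : Sᶜ.ncard + 1 ≤ Fintype.card V := by omega
  have heps : eps G ∈ S := eps_filled G hS hsize hadj hu' hv'
  apply hproper
  rw [Set.eq_univ_iff_forall]
  rintro (w | ⟨e', i⟩ | ⟨⟩)
  · by_contra hw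
    obtain ⟨p⟩ := hG.preconnected w u
    exact spread_walk G hS hsize heps p hw hu'
  · exact path_filled G hS hsize e' i
  · exact heps
end

section
/- Let G = (V,E) be a connected finite simple graph with n = |V|, let k be the largest cardinality of an independent set of G, and let 𝒢 be the graph obtained from G by the subdivision-path-apex construction. Then every proper stalled subset 𝒮 of 𝒢 has cardinality at most (2n+1)·|E| + k. -/
section Aux
variable {V : Type*} [Fintype V] {G : SimpleGraph V}

def pvn (G : SimpleGraph V) (e : G.edgeSet) (i : ℕ) (h : i < 2 * Fintype.card V + 1) :
    GVert G :=
  Sum.inr (Sum.inl (e, ⟨i, h⟩))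

def apx (G : SimpleGraph V) : GVert G := Sum.inr (Sum.inr ())

lemma nbr_interior (e : G.edgeSet) (i : ℕ) (h0 : 0 < i) (h1 : i + 1 < 2 * Fintype.card V + 1)
    (hm : i < 2 * Fintype.card V + 1) (hl : i - 1 < 2 * Fintype.card V + 1)
    (w) (hw : (GG G).Adj (pvn G e i hm) w) :
    w = pvn G e (i-1) hl ∨ w = pvn G e (i+1) h1 := by
  rw [GG, SimpleGraph.fromRel_adj] at hw
  obtain ⟨hne, hr⟩ := hw
  rcases w with v | p | u
  · simp [gRel, pvn] at hr
    omega
  · obtain ⟨e', j⟩ := p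
    simp only [gRel, pvn] at hr
    rcases hr with ⟨he, hj⟩ | ⟨he, hj⟩
    · right; subst he; simp [pvn]; exact Fin.ext (by simp; omega)
    · left; subst he; simp [pvn]; exact Fin.ext (by simp; omega)
  · simp [gRel, pvn] at hr
    omega

lemma nbr_zero (e : G.edgeSet) (h0 : 0 < 2 * Fintype.card V + 1) (h1 : 1 < 2 * Fintype.card V + 1)
    (w) (hw : (GG G).Adj (pvn G e 0 h0) w) :
    (∃ x ∈ (e : Sym2 V), w = Sum.inl x) ∨ w = pvn G e 1 h1 ∨ w = apx G := by
  rw [GG, SimpleGraph.fromRel_adj] at hw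
  obtain ⟨hne, hr⟩ := hw
  rcases w with v | p | u
  · left
    simp [gRel, pvn] at hr
    exact ⟨v, hr, rfl⟩
  · obtain ⟨e', j⟩ := p
    simp only [gRel, pvn] at hr
    rcases hr with ⟨he, hj⟩ | ⟨he, hj⟩
    · right; left; subst he; simp [pvn]; exact Fin.ext (by simp; omega)
    · exfalso; simp at hj
  · right; right; simp [apx]

lemma adj_succ (e : G.edgeSet) (i : ℕ) (h1 : i + 1 < 2 * Fintype.card V + 1)
    (hm : i < 2 * Fintype.card V + 1) : (GG G).Adj (pvn G e i hm) (pvn G e (i+1) h1) := by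
  rw [GG, SimpleGraph.fromRel_adj]
  refine ⟨by simp [pvn], Or.inl ?_⟩
  simp [gRel, pvn]

lemma adj_zero_apx (e : G.edgeSet) (h0 : 0 < 2 * Fintype.card V + 1) :
    (GG G).Adj (pvn G e 0 h0) (apx G) := by
  rw [GG, SimpleGraph.fromRel_adj]
  exact ⟨by simp [pvn, apx], Or.inr (by simp [gRel, pvn, apx])⟩

lemma adj_zero_inl (e : G.edgeSet) (x : V) (hx : x ∈ (e : Sym2 V))
    (h0 : 0 < 2 * Fintype.card V + 1) :
    (GG G).Adj (pvn G e 0 h0) (Sum.inl x) := by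
  rw [GG, SimpleGraph.fromRel_adj]
  exact ⟨by simp [pvn], Or.inr (by simp [gRel, pvn, hx])⟩

variable {S : Set (GVert G)} (hS : Stalled (GG G) S)

include hS

lemma force_up (e : G.edgeSet) (i : ℕ) (h2 : i + 2 < 2 * Fintype.card V + 1)
    (ha : pvn G e i (by omega) ∈ S) (hb : pvn G e (i+1) (by omega) ∈ S) :
    pvn G e (i+2) (by omega) ∈ S := by
  by_contra hc
  refine hS (pvn G e (i+2) (by omega)) ⟨hc, pvn G e (i+1) (by omega), hb, ?_, ?_⟩
  · exact adj_succ (G := G) e (i+1) (by omega) (by omega)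
  · intro w hw hwS
    rcases nbr_interior e (i+1) (by omega) (by omega) (by omega) (by omega) w hw with h | h
    · exact absurd (h ▸ ha) (fun hh => hwS hh)
    · rw [h]

lemma force_down (e : G.edgeSet) (i : ℕ) (h2 : i + 2 < 2 * Fintype.card V + 1)
    (ha : pvn G e (i+1) (by omega) ∈ S) (hb : pvn G e (i+2) (by omega) ∈ S) :
    pvn G e i (by omega) ∈ S := by
  by_contra hc
  refine hS (pvn G e i (by omega)) ⟨hc, pvn G e (i+1) (by omega), ha, ?_, ?_⟩
  · exact ((adj_succ (G := G) e i (by omega) (by omega)).symm)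
  · intro w hw hwS
    rcases nbr_interior e (i+1) (by omega) (by omega) (by omega) (by omega) w hw with h | h
    · exact h
    · exact absurd (h ▸ hb) (fun hh => hwS hh)

lemma claimA (e : G.edgeSet) (j : ℕ) (hj : j + 1 < 2 * Fintype.card V + 1)
    (ha : pvn G e j (by omega) ∈ S) (hb : pvn G e (j+1) (by omega) ∈ S) :
    ∀ i (h : i < 2 * Fintype.card V + 1), pvn G e i h ∈ S := by
  set M := 2 * Fintype.card V + 1 with hM
  -- upward
  have up : ∀ i, j ≤ i → (∀ h : i < M, pvn G e i h ∈ S) ∧ (∀ h : i + 1 < M, pvn G e (i+1) h ∈ S) := by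
    intro i hi
    induction i, hi using Nat.le_induction with
    | base => exact ⟨fun h => ha, fun h => hb⟩
    | succ n hn ih =>
      refine ⟨fun h => ih.2 h, fun h => ?_⟩
      exact force_up hS e n (by omega) (ih.1 (by omega)) (ih.2 (by omega))
  -- downward
  have down : ∀ d, d ≤ j → (pvn G e (j - d) (by omega) ∈ S ∧ ∀ h : j - d + 1 < M, pvn G e (j - d + 1) h ∈ S) := by
    intro d
    induction d with
    | zero => exact fun _ => ⟨ha, fun h => hb⟩
    | succ n ih =>
      intro hd
      obtain ⟨ih1, ih2⟩ := ih (by omega)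
      have h2 : (j - (n+1)) + 2 < M := by omega
      have e1 : pvn G e (j - (n+1) + 1) (by omega) ∈ S := by
        convert ih1 using 2
        omega
      have e2 : pvn G e (j - (n+1) + 2) (by omega) ∈ S := by
        have := ih2 (by omega)
        convert this using 2
        omega
      exact ⟨force_down hS e (j - (n+1)) h2 e1 e2, fun h => e1⟩
  intro i h
  rcases le_or_gt j i with hle | hlt
  · exact (up i hle).1 h
  · have := (down (j - i) (by omega)).1
    convert this using 2 <;> omega

lemma apex_forced (hcard : 0 < Fintype.card V) (e : G.edgeSet)
    (h0 : pvn G e 0 (by omega) ∈ S) (h1 : pvn G e 1 (by omega) ∈ S)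
    (hall : ∀ x ∈ (e : Sym2 V), Sum.inl x ∈ S) (hapx : apx G ∉ S) : False := by
  refine hS (apx G) ⟨hapx, pvn G e 0 (by omega), h0, adj_zero_apx e (by omega), ?_⟩
  intro w hw hwS
  rcases nbr_zero e (by omega) (by omega) w hw with ⟨x, hx, rfl⟩ | h | h
  · exact absurd (hall x hx) hwS
  · exact absurd (h ▸ h1) (fun hh => hwS hh)
  · exact h

lemma endpoint_forced (hcard : 0 < Fintype.card V) (e : G.edgeSet) (y : V)
    (h0 : pvn G e 0 (by omega) ∈ S) (h1 : pvn G e 1 (by omega) ∈ S)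
    (hy : y ∈ (e : Sym2 V)) (hyS : Sum.inl y ∉ S)
    (hother : ∀ x ∈ (e : Sym2 V), x ≠ y → Sum.inl x ∈ S) (hapx : apx G ∈ S) : False := by
  refine hS (Sum.inl y) ⟨hyS, pvn G e 0 (by omega), h0, adj_zero_inl e y hy (by omega), ?_⟩
  intro w hw hwS
  rcases nbr_zero e (by omega) (by omega) w hw with ⟨x, hx, rfl⟩ | h | h
  · by_contra hne
    exact hwS (hother x hx (fun hxy => hne (by rw [hxy])))
  · exact absurd (h ▸ h1) (fun hh => hwS hh)
  · exact absurd (h ▸ hapx) (fun hh => hwS hh)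

end Aux

/-- for connected `G` with independence number `k`, every proper stalled
subset of `𝒢` has cardinality at most `(2n+1)·|E| + k`. -/
theorem stalled_card_le {V : Type*} [Fintype V] (G : SimpleGraph V)
    (hG : G.Connected) (k : ℕ)
    (hk : IsGreatest {m | ∃ U : Set V, IndepIn G U ∧ U.ncard = m} k)
    (S : Set (GVert G)) (hS : Stalled (GG G) S) (hproper : S ≠ Set.univ) :
    S.ncard ≤ (2 * Fintype.card V + 1) * G.edgeSet.ncard + k := by
  classical
  have hne : Nonempty V := hG.nonempty
  have hcard : 0 < Fintype.card V := Fintype.card_pos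
  set M := 2 * Fintype.card V + 1 with hM
  have hk1 : 1 ≤ k := by
    obtain ⟨v⟩ := hne
    exact hk.2 ⟨{v}, by simp [IndepIn], by simp⟩
  set f2 : G.edgeSet × Fin M → GVert G := fun p => Sum.inr (Sum.inl p) with hf2
  have hf2inj : Function.Injective f2 := by
    intro a b hab
    simpa [hf2] using hab
  have hrange2 : (Set.range f2).ncard = G.edgeSet.ncard * M := by
    rw [← Nat.card_coe_set_eq, Nat.card_range_of_injective hf2inj, Nat.card_prod,
      Nat.card_eq_fintype_card (α := Fin M), Fintype.card_fin, Nat.card_coe_set_eq]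
  have hrange1 : (Set.range (Sum.inl : V → GVert G)).ncard = Fintype.card V := by
    rw [← Nat.card_coe_set_eq, Nat.card_range_of_injective Sum.inl_injective,
      Nat.card_eq_fintype_card]
  rw [mul_comm]
  by_cases hfull : ∀ (e : G.edgeSet) (i : Fin M), Sum.inr (Sum.inl (e, i)) ∈ S
  · by_cases hap : apx G ∈ S
    · -- all paths full and apex filled: no graph vertex is filled
      have hiff : ∀ u v : V, G.Adj u v → (Sum.inl u ∈ S → Sum.inl v ∈ S) := by
        intro u v huv hu
        by_contra hv
        refine endpoint_forced hS hcard ⟨s(u,v), huv⟩ v (hfull _ ⟨0, by omega⟩)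
          (hfull _ ⟨1, by omega⟩) ?_ hv ?_ hap
        · exact Sym2.mem_mk_right u v
        · intro x hx hxv
          rcases Sym2.mem_iff.mp hx with rfl | rfl
          · exact hu
          · exact absurd rfl hxv
      have hreach : ∀ u v : V, Sum.inl u ∈ S → Sum.inl v ∈ S := by
        intro u v hu
        obtain ⟨w⟩ := hG.preconnected u v
        induction w with
        | nil => exact hu
        | cons h p ih => exact ih (hiff _ _ h hu)
      have hAempty : ∀ u : V, Sum.inl u ∉ S := by
        intro u hu
        apply hproper
        ext x
        simp only [Set.mem_univ, iff_true]
        rcases x with v | p | t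
        · exact hreach u v hu
        · obtain ⟨e, i⟩ := p
          exact hfull e i
        · exact hap
      have hsub : S ⊆ Set.range f2 ∪ {apx G} := by
        intro x hx
        rcases x with v | p | t
        · exact absurd hx (hAempty v)
        · exact Or.inl ⟨p, rfl⟩
        · exact Or.inr rfl
      calc S.ncard ≤ (Set.range f2 ∪ {apx G}).ncard :=
            Set.ncard_le_ncard hsub (Set.toFinite _)
        _ ≤ (Set.range f2).ncard + ({apx G} : Set (GVert G)).ncard := Set.ncard_union_le _ _
        _ = G.edgeSet.ncard * M + 1 := by rw [hrange2, Set.ncard_singleton]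
        _ ≤ G.edgeSet.ncard * M + k := by omega
    · -- all paths full, apex empty: filled graph vertices form an independent set
      have hindep : IndepIn G (Sum.inl ⁻¹' S) := by
        intro u hu v hv huv hadj
        refine apex_forced hS hcard ⟨s(u,v), hadj⟩ (hfull _ ⟨0, by omega⟩)
          (hfull _ ⟨1, by omega⟩) ?_ hap
        intro x hx
        rcases Sym2.mem_iff.mp hx with rfl | rfl
        · exact hu
        · exact hv
      have hA : (Sum.inl ⁻¹' S).ncard ≤ k := hk.2 ⟨_, hindep, rfl⟩
      have hsub : S ⊆ Sum.inl '' (Sum.inl ⁻¹' S) ∪ Set.range f2 := by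
        intro x hx
        rcases x with v | p | t
        · exact Or.inl ⟨v, hx, rfl⟩
        · exact Or.inr ⟨p, rfl⟩
        · exact absurd hx hap
      calc S.ncard ≤ (Sum.inl '' (Sum.inl ⁻¹' S) ∪ Set.range f2).ncard :=
            Set.ncard_le_ncard hsub (Set.toFinite _)
        _ ≤ (Sum.inl '' (Sum.inl ⁻¹' S)).ncard + (Set.range f2).ncard := Set.ncard_union_le _ _
        _ ≤ k + G.edgeSet.ncard * M := by
            rw [Set.ncard_image_of_injective _ Sum.inl_injective, hrange2]
            omega
        _ = G.edgeSet.ncard * M + k := by omega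
  · -- some path vertex empty
    push_neg at hfull
    obtain ⟨e₀, i₀, hi₀⟩ := hfull
    have hnofull : ¬ ∀ i (h : i < M), pvn G e₀ i h ∈ S := fun h => hi₀ (h i₀.val i₀.isLt)
    have hnc : ∀ j (hj : j + 1 < M), ¬(pvn G e₀ j (by omega) ∈ S ∧ pvn G e₀ (j+1) (by omega) ∈ S) := by
      intro j hj ⟨ha, hb⟩
      exact hnofull (claimA hS e₀ j hj ha hb)
    set T : Set (Fin M) := {i : Fin M | Sum.inr (Sum.inl (e₀, i)) ∈ S} with hT
    have hTcard : T.ncard ≤ Fintype.card V + 1 := by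
      have hinj : Set.InjOn (fun i : Fin M => i.val / 2) T := by
        intro a ha b hb hab
        simp only at hab
        rcases lt_trichotomy a.val b.val with h | h | h
        · exfalso
          have hb' : b = ⟨a.val + 1, by omega⟩ := Fin.ext (by simp; omega)
          rw [hb'] at hb
          exact hnc a.val (by omega) ⟨ha, hb⟩
        · exact Fin.ext h
        · exfalso
          have ha' : a = ⟨b.val + 1, by omega⟩ := Fin.ext (by simp; omega)
          rw [ha'] at ha
          exact hnc b.val (by omega) ⟨hb, ha⟩
      have himg : (fun i : Fin M => i.val / 2) '' T ⊆ ↑(Finset.range (Fintype.card V + 1)) := by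
        rintro x ⟨i, hi, rfl⟩
        simp only [Finset.coe_range, Set.mem_Iio]
        have := i.isLt
        omega
      calc T.ncard = ((fun i : Fin M => i.val / 2) '' T).ncard :=
            (Set.ncard_image_of_injOn hinj).symm
        _ ≤ (↑(Finset.range (Fintype.card V + 1)) : Set ℕ).ncard :=
            Set.ncard_le_ncard himg (Set.toFinite _)
        _ = Fintype.card V + 1 := by rw [Set.ncard_coe_finset, Finset.card_range]
    have hTc : Fintype.card V ≤ Tᶜ.ncard := by
      have := Set.ncard_add_ncard_compl T
      rw [Nat.card_eq_fintype_card (α := Fin M), Fintype.card_fin] at this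
      omega
    set B : Set (GVert G) := f2 '' (f2 ⁻¹' S) with hB
    set D : Set (GVert G) := (fun i : Fin M => f2 (e₀, i)) '' Tᶜ with hD
    have hDdisj : Disjoint B D := by
      rw [Set.disjoint_left]
      rintro x ⟨p, hp, rfl⟩ ⟨i, hi, hix⟩
      apply hi
      have : p = (e₀, i) := hf2inj hix.symm
      rw [this] at hp
      exact hp
    have hDcard : D.ncard = Tᶜ.ncard := by
      apply Set.ncard_image_of_injOn
      intro a _ b _ hab
      simpa using hf2inj hab
    have hBD : B.ncard + Tᶜ.ncard ≤ G.edgeSet.ncard * M := by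
      have hsub : B ∪ D ⊆ Set.range f2 := by
        rintro x (⟨p, _, rfl⟩ | ⟨i, _, rfl⟩)
        · exact ⟨p, rfl⟩
        · exact ⟨(e₀, i), rfl⟩
      calc B.ncard + Tᶜ.ncard = B.ncard + D.ncard := by rw [hDcard]
        _ = (B ∪ D).ncard := (Set.ncard_union_eq hDdisj (Set.toFinite _) (Set.toFinite _)).symm
        _ ≤ (Set.range f2).ncard := Set.ncard_le_ncard hsub (Set.toFinite _)
        _ = G.edgeSet.ncard * M := hrange2
    have hsub : S ⊆ Set.range (Sum.inl : V → GVert G) ∪ B ∪ {apx G} := by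
      intro x hx
      rcases x with v | p | t
      · exact Or.inl (Or.inl ⟨v, rfl⟩)
      · exact Or.inl (Or.inr ⟨p, hx, rfl⟩)
      · exact Or.inr rfl
    have hmain : S.ncard ≤ Fintype.card V + B.ncard + 1 := by
      calc S.ncard ≤ (Set.range (Sum.inl : V → GVert G) ∪ B ∪ {apx G}).ncard :=
            Set.ncard_le_ncard hsub (Set.toFinite _)
        _ ≤ (Set.range (Sum.inl : V → GVert G) ∪ B).ncard + ({apx G} : Set (GVert G)).ncard :=
            Set.ncard_union_le _ _
        _ ≤ (Set.range (Sum.inl : V → GVert G)).ncard + B.ncard + 1 := by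
            have := Set.ncard_union_le (Set.range (Sum.inl : V → GVert G)) B
            rw [Set.ncard_singleton]
            omega
        _ = Fintype.card V + B.ncard + 1 := by rw [hrange1]
    omega
end
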